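/- Let n, k ∈ ℕ, T = ℝ^n, I = {i ∈ ℤ_+^n : |i| ≤ 2k}, ρ(t) = e^{−‖t‖^{2k}}, and let g = (g_i)_{i∈I} be real numbers with g_0 = 1. Suppose λ* ∈ ℝ^N (N = card I) is a point at which the functional L(λ) = Σ_{|i|≤2k} g_i λ_i − ∫_{ℝ^n} e^{Σ_{|i|≤2k} λ_i t^i} ρ(t) dt attains its finite global maximum, and suppose moreover that the homogeneous polynomial p(t) = Σ_{|i|=2k} λ*_i t^i satisfies p(t) < 0 for all t ≠ 0. Then λ* lies in the interior of the effective domain dom L = {λ ∈ ℝ^N : L(λ) > −∞}, and the function f_0(t) = e^{Σ_{|i|≤2k} λ*_i t^i} ρ(t) is a solution of the full truncated moment problem: ∫_{ℝ^n} t^i f_0(t) dt = g_i for all i with |i| ≤ 2k. -/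

import Mathlib

open MeasureTheory Real ENNReal

/-- The monomial `t ^ i = t₁^{i₁} ⋯ tₙ^{iₙ}`. -/
noncomputable def monom {n : ℕ} (i : Fin n → ℕ) (t : Fin n → ℝ) : ℝ := ∏ j, t j ^ i j

/-- The reference density `ρ(t) = e^{−‖t‖^{2k}} = e^{−(∑_j t_j²)^k}` on `ℝⁿ`. -/
noncomputable def rhoRef {n : ℕ} (k : ℕ) (t : Fin n → ℝ) : ℝ :=
  Real.exp (-(∑ j, t j ^ 2) ^ k)

/-- The concave Lagrangian functional on `T = ℝⁿ`:
`L(λ) = ∑_{|i|≤2k} g_i λ_i − ∫_{ℝⁿ} e^{∑ λ_i t^i} ρ(t) dt`, with values in `ℝ ∪ {−∞}`. -/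
noncomputable def Lag {n : ℕ} (I : Finset (Fin n → ℕ))
    (g : (Fin n → ℕ) → ℝ) (ρ : (Fin n → ℝ) → ℝ) (lam : {i // i ∈ I} → ℝ) : EReal :=
  ((∑ i ∈ I.attach, g i.1 * lam i : ℝ) : EReal)
    - ((∫⁻ t, ENNReal.ofReal (Real.exp (∑ i ∈ I.attach, lam i * monom i.1 t) * ρ t)) : EReal)

/-- The candidate maximum-entropy density `f₀(t) = e^{∑ λ*_i t^i} ρ(t)`. -/
noncomputable def maxEntDens {n : ℕ} (k : ℕ) (I : Finset (Fin n → ℕ))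
    (lamstar : {i // i ∈ I} → ℝ) (t : Fin n → ℝ) : ℝ :=
  Real.exp (∑ i ∈ I.attach, lamstar i * monom i.1 t) * rhoRef k t

/-! Write `⟨t⟩ = √(1 + ‖t‖²)`, which bounds `|t^i|` by `⟨t⟩^{|i|}`. In the exponent
`∑ λ_i t^i − ‖t‖^{2k}` the top-degree part of `λ*` is `≤ 0`, its lower-degree part is
`O(⟨t⟩^{2k-1})`, moving `λ` by `ε ≤ 1/(4(|I|+1))` in sup norm adds at most `⟨t⟩^{2k}/4`, and
`‖t‖^{2k} ≥ ⟨t⟩^{2k} − k⟨t⟩^{2k-1}`. So `⟨t⟩^{2k} f_λ` has a Gaussian majorant uniformly on a ball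
around `λ*`: `L` is finite there, and differentiating under the integral sign along each
coordinate line gives `∂L/∂λ_i (λ*) = g_i − ∫ t^i f₀`, which vanishes at the maximum. -/

noncomputable def japaneseBracket {n : ℕ} (t : Fin n → ℝ) : ℝ := √(1 + ∑ j, t j ^ 2)

noncomputable def coeffPoly {n : ℕ} (I : Finset (Fin n → ℕ)) (lam : {i // i ∈ I} → ℝ)
    (t : Fin n → ℝ) : ℝ :=
  ∑ i ∈ I.attach, lam i * monom i.1 t

section Monomials

variable {n : ℕ}

lemma continuous_monom (i : Fin n → ℕ) : Continuous (monom i) :=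
  continuous_finsetProd _ fun j _ => (continuous_apply j).pow _

lemma monom_zero_eq_zero {i : Fin n → ℕ} (hi : i ≠ 0) : monom i 0 = 0 := by
  obtain ⟨j, hj⟩ := Function.ne_iff.1 hi
  exact Finset.prod_eq_zero (Finset.mem_univ j) (by simp [zero_pow hj])

lemma sq_japaneseBracket (t : Fin n → ℝ) : japaneseBracket t ^ 2 = 1 + ∑ j, t j ^ 2 :=
  Real.sq_sqrt (by positivity)

lemma japaneseBracket_nonneg (t : Fin n → ℝ) : 0 ≤ japaneseBracket t := Real.sqrt_nonneg _

lemma one_le_japaneseBracket (t : Fin n → ℝ) : 1 ≤ japaneseBracket t :=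
  Real.one_le_sqrt.2 (by simp only [le_add_iff_nonneg_right]; positivity)

lemma abs_monom_le_japaneseBracket_pow {i : Fin n → ℕ} {d : ℕ} (hd : ∑ m, i m ≤ d)
    (t : Fin n → ℝ) : |monom i t| ≤ japaneseBracket t ^ d := by
  have hx := one_le_japaneseBracket t
  refine le_of_pow_le_pow_left₀ two_ne_zero (by positivity) ?_
  calc |monom i t| ^ 2 = ∏ j, (t j ^ 2) ^ i j := by
        rw [sq_abs, monom, ← Finset.prod_pow]
        exact Finset.prod_congr rfl fun j _ => by ring
    _ ≤ ∏ j, (japaneseBracket t ^ 2) ^ i j := by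
        refine Finset.prod_le_prod (fun j _ => by positivity) fun j _ => ?_
        refine pow_le_pow_left₀ (sq_nonneg _) ?_ _
        rw [sq_japaneseBracket]
        linarith [Finset.single_le_sum (fun l _ => sq_nonneg (t l)) (Finset.mem_univ j)]
    _ = (japaneseBracket t ^ 2) ^ ∑ m, i m := Finset.prod_pow_eq_pow_sum _ _ _
    _ ≤ (japaneseBracket t ^ 2) ^ d := pow_le_pow_right₀ (one_le_pow₀ hx) hd
    _ = (japaneseBracket t ^ d) ^ 2 := by ring

end Monomials

lemma japaneseBracket_pow_sub_le_sum_sq_pow {n : ℕ} (k : ℕ) (t : Fin n → ℝ) :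
    japaneseBracket t ^ (2 * k) - k * japaneseBracket t ^ (2 * k - 1) ≤ (∑ j, t j ^ 2) ^ k := by
  set x := japaneseBracket t
  have hx : 1 ≤ x := one_le_japaneseBracket t
  have hx2 : 1 ≤ x ^ 2 := one_le_pow₀ hx
  have hdiff := (le_abs_self _).trans (abs_pow_sub_pow_le (x ^ 2) (x ^ 2 - 1) k)
  rw [show x ^ 2 - (x ^ 2 - 1) = 1 by ring, abs_one, one_mul,
    abs_of_nonneg (by linarith : (0 : ℝ) ≤ x ^ 2),
    abs_of_nonneg (by linarith : (0 : ℝ) ≤ x ^ 2 - 1), max_eq_left (by linarith), ← pow_mul, ← pow_mul] at hdiff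
  have : x ^ (2 * (k - 1)) ≤ x ^ (2 * k - 1) := pow_le_pow_right₀ hx (by omega)
  rw [show ∑ j, t j ^ 2 = x ^ 2 - 1 by rw [sq_japaneseBracket]; ring]
  nlinarith [(Nat.cast_nonneg (α := ℝ) k)]

lemma integrable_exp_neg_japaneseBracket_sq_div_two (n : ℕ) :
    Integrable (fun t : Fin n → ℝ => Real.exp (-japaneseBracket t ^ 2 / 2)) := by
  have h : (fun t : Fin n → ℝ => Real.exp (-japaneseBracket t ^ 2 / 2))
      = fun t => Real.exp (-(1 / 2)) * ∏ j, Real.exp (-(1 / 2) * t j ^ 2) := by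
    ext t
    rw [sq_japaneseBracket, ← Real.exp_sum, ← Real.exp_add, ← Finset.mul_sum]
    ring_nf
  rw [h]
  exact (Integrable.fintype_prod fun _ => integrable_exp_neg_mul_sq (by norm_num)).const_mul _

lemma mul_pow_sub_pow_succ_le {C x : ℝ} (hC : 0 ≤ C) (hx : 0 ≤ x) (m : ℕ) :
    C * x ^ m - x ^ (m + 1) ≤ C ^ (m + 1) := by
  rcases le_total x C with h | h
  · have : C * x ^ m ≤ C * C ^ m := mul_le_mul_of_nonneg_left (pow_le_pow_left₀ hx h m) hC
    linarith [pow_nonneg hx (m + 1), pow_succ' C m]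
  · have : C * x ^ m ≤ x ^ (m + 1) := by
      rw [pow_succ']; exact mul_le_mul_of_nonneg_right h (pow_nonneg hx m)
    linarith [pow_nonneg hC (m + 1)]

lemma pow_le_exp_mul_pow {m : ℕ} (hm : 1 ≤ m) {x : ℝ} (hx : 1 ≤ x) :
    x ^ (m + 1) ≤ Real.exp ((m + 1) * x ^ m) :=
  calc x ^ (m + 1) ≤ Real.exp x ^ (m + 1) :=
        pow_le_pow_left₀ (by linarith) (by linarith [Real.add_one_le_exp x]) _
    _ = Real.exp ((m + 1) * x) := by rw [← Real.exp_nat_mul]; push_cast; ring_nf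
    _ ≤ Real.exp ((m + 1) * x ^ m) := by
        gcongr; exact le_self_pow₀ hx (by omega)

lemma one_add_pow_mul_exp_le {m : ℕ} (hm : 1 ≤ m) {C x : ℝ} (hC : 0 ≤ C) (hx : 1 ≤ x) :
    (1 + x ^ (m + 1)) * Real.exp (C * x ^ m - 3 / 4 * x ^ (m + 1))
      ≤ 2 * Real.exp ((4 * (C + m + 1)) ^ (m + 1) / 4) * Real.exp (-x ^ 2 / 2) := by
  have hx0 : 0 ≤ x := by linarith
  have hsq : x ^ 2 ≤ x ^ (m + 1) := pow_le_pow_right₀ hx (by omega)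
  have hpeak := mul_pow_sub_pow_succ_le (C := 4 * (C + m + 1)) (by positivity) hx0 m
  calc (1 + x ^ (m + 1)) * Real.exp (C * x ^ m - 3 / 4 * x ^ (m + 1))
      ≤ 2 * Real.exp ((m + 1) * x ^ m) * Real.exp (C * x ^ m - 3 / 4 * x ^ (m + 1)) := by
        gcongr
        linarith [one_le_pow₀ (n := m + 1) hx, pow_le_exp_mul_pow hm hx]
    _ = 2 * Real.exp ((4 * (C + m + 1) * x ^ m - x ^ (m + 1)) / 4 - x ^ 2 / 2
          + (x ^ 2 / 2 - x ^ (m + 1) / 2)) := by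
        rw [mul_assoc, ← Real.exp_add]; ring_nf
    _ ≤ 2 * Real.exp ((4 * (C + m + 1)) ^ (m + 1) / 4 - x ^ 2 / 2) := by
        gcongr 2 * Real.exp ?_; linarith
    _ = 2 * Real.exp ((4 * (C + m + 1)) ^ (m + 1) / 4) * Real.exp (-x ^ 2 / 2) := by
        rw [mul_assoc, ← Real.exp_add]; ring_nf

section Domination

variable {n k : ℕ} {I : Finset (Fin n → ℕ)}

lemma coeffPoly_sub_coeffPoly_le (hI : ∀ i ∈ I, ∑ m, i m ≤ 2 * k) (lam lam' : {i // i ∈ I} → ℝ)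
    (t : Fin n → ℝ) :
    coeffPoly I lam t - coeffPoly I lam' t
      ≤ I.card * ‖lam - lam'‖ * japaneseBracket t ^ (2 * k) := by
  have hterm : ∀ i ∈ I.attach,
      (lam i - lam' i) * monom i.1 t ≤ ‖lam - lam'‖ * japaneseBracket t ^ (2 * k) := fun i _ =>
    calc (lam i - lam' i) * monom i.1 t ≤ |lam i - lam' i| * |monom i.1 t| := by
          rw [← abs_mul]; exact le_abs_self _
      _ ≤ ‖lam - lam'‖ * japaneseBracket t ^ (2 * k) :=
          mul_le_mul (norm_le_pi_norm (lam - lam') i)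
            (abs_monom_le_japaneseBracket_pow (hI i.1 i.2) t) (abs_nonneg _) (norm_nonneg _)
  calc coeffPoly I lam t - coeffPoly I lam' t
      = ∑ i ∈ I.attach, (lam i - lam' i) * monom i.1 t := by
        simp only [coeffPoly, ← Finset.sum_sub_distrib, sub_mul]
    _ ≤ I.card * ‖lam - lam'‖ * japaneseBracket t ^ (2 * k) := by
        simpa [mul_assoc] using Finset.sum_le_card_nsmul _ _ _ hterm

lemma coeffPoly_le_of_top_nonpos (hI : ∀ i ∈ I, ∑ m, i m ≤ 2 * k) (lam : {i // i ∈ I} → ℝ)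
    (t : Fin n → ℝ)
    (hp : ∑ i ∈ I.attach.filter (fun i => ∑ m, i.1 m = 2 * k), lam i * monom i.1 t ≤ 0) :
    coeffPoly I lam t ≤ (∑ i ∈ I.attach, |lam i|) * japaneseBracket t ^ (2 * k - 1) := by
  rw [coeffPoly, ← Finset.sum_filter_add_sum_filter_not I.attach
    (fun i => ∑ m, i.1 m = 2 * k), Finset.sum_mul]
  have hlow : ∑ i ∈ I.attach with ¬∑ m, i.1 m = 2 * k, lam i * monom i.1 t
      ≤ ∑ i ∈ I.attach with ¬∑ m, i.1 m = 2 * k, |lam i| * japaneseBracket t ^ (2 * k - 1) := by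
    refine Finset.sum_le_sum fun i hi => ?_
    have hdeg : ∑ m, i.1 m ≤ 2 * k - 1 := by
      have := hI i.1 i.2; have := (Finset.mem_filter.1 hi).2; omega
    calc lam i * monom i.1 t ≤ |lam i| * |monom i.1 t| := by
          rw [← abs_mul]; exact le_abs_self _
      _ ≤ |lam i| * japaneseBracket t ^ (2 * k - 1) :=
          mul_le_mul_of_nonneg_left (abs_monom_le_japaneseBracket_pow hdeg t) (abs_nonneg _)
  have hsub : ∑ i ∈ I.attach with ¬∑ m, i.1 m = 2 * k, |lam i| * japaneseBracket t ^ (2 * k - 1)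
      ≤ ∑ i ∈ I.attach, |lam i| * japaneseBracket t ^ (2 * k - 1) :=
    Finset.sum_le_sum_of_subset_of_nonneg (Finset.filter_subset _ _) fun i _ _ =>
      mul_nonneg (abs_nonneg _) (pow_nonneg (japaneseBracket_nonneg t) _)
  linarith

lemma top_nonpos_of_neg (hk : 0 < k) (lam : {i // i ∈ I} → ℝ)
    (hneg : ∀ t : Fin n → ℝ, t ≠ 0 →
      ∑ i ∈ I.attach.filter (fun i => ∑ m, i.1 m = 2 * k), lam i * monom i.1 t < 0)
    (t : Fin n → ℝ) :
    ∑ i ∈ I.attach.filter (fun i => ∑ m, i.1 m = 2 * k), lam i * monom i.1 t ≤ 0 := by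
  rcases eq_or_ne t 0 with rfl | ht
  · refine (Finset.sum_eq_zero fun i hi => ?_).le
    have hi0 : i.1 ≠ 0 := by
      rintro h
      have := (Finset.mem_filter.1 hi).2
      simp [h] at this
      omega
    rw [monom_zero_eq_zero hi0, mul_zero]
  · exact (hneg t ht).le

lemma exists_one_add_pow_mul_maxEntDens_le (hk : 0 < k) (hI : ∀ i ∈ I, ∑ m, i m ≤ 2 * k)
    (lamstar : {i // i ∈ I} → ℝ)
    (hp : ∀ t : Fin n → ℝ,
      ∑ i ∈ I.attach.filter (fun i => ∑ m, i.1 m = 2 * k), lamstar i * monom i.1 t ≤ 0) :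
    ∃ ε > 0, ∃ B : ℝ, ∀ lam ∈ Metric.closedBall lamstar ε, ∀ t : Fin n → ℝ,
      (1 + japaneseBracket t ^ (2 * k)) * maxEntDens k I lam t
        ≤ B * Real.exp (-japaneseBracket t ^ 2 / 2) := by
  set C := ∑ i ∈ I.attach, |lamstar i| + k
  have hm : 2 * k - 1 + 1 = 2 * k := by omega
  refine ⟨1 / (4 * (I.card + 1)), by positivity,
    2 * Real.exp ((4 * (C + (2 * k - 1 : ℕ) + 1)) ^ (2 * k - 1 + 1) / 4), fun lam hlam t => ?_⟩
  set x := japaneseBracket t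
  have hx : 0 ≤ x := japaneseBracket_nonneg t
  have hclose : (I.card : ℝ) * ‖lam - lamstar‖ ≤ 1 / 4 := by
    rw [← dist_eq_norm]
    calc (I.card : ℝ) * dist lam lamstar ≤ I.card * (1 / (4 * (I.card + 1))) :=
          mul_le_mul_of_nonneg_left (Metric.mem_closedBall.1 hlam) (by positivity)
      _ ≤ 1 / 4 := by rw [mul_one_div, div_le_div_iff₀ (by positivity) (by norm_num)]; linarith
  have hexp :
      coeffPoly I lam t - (∑ j, t j ^ 2) ^ k ≤ C * x ^ (2 * k - 1) - 3 / 4 * x ^ (2 * k) := by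
    have := coeffPoly_sub_coeffPoly_le hI lam lamstar t
    have := coeffPoly_le_of_top_nonpos hI lamstar t (hp t)
    have := japaneseBracket_pow_sub_le_sum_sq_pow k t
    have := mul_le_mul_of_nonneg_right hclose (pow_nonneg hx (2 * k))
    linarith
  calc (1 + x ^ (2 * k)) * maxEntDens k I lam t
      = (1 + x ^ (2 * k - 1 + 1)) * Real.exp (coeffPoly I lam t - (∑ j, t j ^ 2) ^ k) := by
        rw [hm, maxEntDens, rhoRef, ← Real.exp_add, sub_eq_add_neg]; rfl
    _ ≤ (1 + x ^ (2 * k - 1 + 1))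
          * Real.exp (C * x ^ (2 * k - 1) - 3 / 4 * x ^ (2 * k - 1 + 1)) := by
        rw [hm]; gcongr
    _ ≤ _ := one_add_pow_mul_exp_le (by omega) (by positivity) (one_le_japaneseBracket t)

end Domination

lemma Lag_eq_coe_of_integrable {n : ℕ} {I : Finset (Fin n → ℕ)} (g : (Fin n → ℕ) → ℝ)
    {ρ : (Fin n → ℝ) → ℝ} (hρ : ∀ t, 0 ≤ ρ t) {lam : {i // i ∈ I} → ℝ}
    (hint : Integrable fun t => Real.exp (coeffPoly I lam t) * ρ t) :
    Lag I g ρ lam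
      = ((∑ i ∈ I.attach, g i.1 * lam i - ∫ t, Real.exp (coeffPoly I lam t) * ρ t : ℝ) :
          EReal) := by
  have hnonneg : ∀ t, 0 ≤ Real.exp (coeffPoly I lam t) * ρ t :=
    fun t => mul_nonneg (Real.exp_pos _).le (hρ t)
  unfold Lag
  unfold coeffPoly at hint hnonneg ⊢
  rw [← ofReal_integral_eq_lintegral_ofReal hint (ae_of_all _ hnonneg),
    EReal.coe_ennreal_ofReal, max_eq_left (integral_nonneg hnonneg), ← EReal.coe_sub]

lemma coeffPoly_add_smul_single {n : ℕ} {I : Finset (Fin n → ℕ)} (lam : {i // i ∈ I} → ℝ)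
    (ι : {i // i ∈ I}) (s : ℝ) (t : Fin n → ℝ) :
    coeffPoly I (lam + s • Pi.single ι (1 : ℝ)) t = coeffPoly I lam t + s * monom ι.1 t := by
  simp [coeffPoly, add_mul, Finset.sum_add_distrib, Pi.single_apply]

lemma sum_mul_add_smul_single {n : ℕ} {I : Finset (Fin n → ℕ)} (g : (Fin n → ℕ) → ℝ)
    (lam : {i // i ∈ I} → ℝ) (ι : {i // i ∈ I}) (s : ℝ) :
    ∑ i ∈ I.attach, g i.1 * (lam + s • Pi.single ι 1 : {i // i ∈ I} → ℝ) i
      = ∑ i ∈ I.attach, g i.1 * lam i + s * g ι.1 := by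
  simp [mul_add, Finset.sum_add_distrib, Pi.single_apply, mul_comm]

section Variational

variable {n k : ℕ} {I : Finset (Fin n → ℕ)}

lemma continuous_maxEntDens (lam : {i // i ∈ I} → ℝ) : Continuous (maxEntDens k I lam) :=
  (Real.continuous_exp.comp (continuous_finsetSum _ fun i _ =>
    continuous_const.mul (continuous_monom i.1))).mul
    (Real.continuous_exp.comp ((continuous_finsetSum _ fun j _ =>
      (continuous_apply j).pow 2).pow k).neg)

lemma maxEntDens_pos (lam : {i // i ∈ I} → ℝ) (t : Fin n → ℝ) : 0 < maxEntDens k I lam t :=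
  mul_pos (Real.exp_pos _) (Real.exp_pos _)

lemma abs_monom_mul_maxEntDens_le {i : Fin n → ℕ} (hi : ∑ m, i m ≤ 2 * k)
    (lam : {i // i ∈ I} → ℝ) (t : Fin n → ℝ) :
    |monom i t * maxEntDens k I lam t|
      ≤ (1 + japaneseBracket t ^ (2 * k)) * maxEntDens k I lam t := by
  rw [abs_mul, abs_of_pos (maxEntDens_pos lam t)]
  exact mul_le_mul_of_nonneg_right (by linarith [abs_monom_le_japaneseBracket_pow hi t])
    (maxEntDens_pos lam t).le

lemma maxEntDens_le_one_add_pow_mul (lam : {i // i ∈ I} → ℝ) (t : Fin n → ℝ) :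
    maxEntDens k I lam t ≤ (1 + japaneseBracket t ^ (2 * k)) * maxEntDens k I lam t :=
  le_mul_of_one_le_left (maxEntDens_pos lam t).le
    (le_add_of_nonneg_right (pow_nonneg (japaneseBracket_nonneg t) _))

variable {lamstar : {i // i ∈ I} → ℝ} {ε : ℝ} {bound : (Fin n → ℝ) → ℝ}

lemma integrable_maxEntDens_of_le {lam : {i // i ∈ I} → ℝ} (hbound : Integrable bound)
    (hdom : ∀ t, (1 + japaneseBracket t ^ (2 * k)) * maxEntDens k I lam t ≤ bound t) :
    Integrable (maxEntDens k I lam) :=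
  hbound.mono' (continuous_maxEntDens lam).aestronglyMeasurable (ae_of_all _ fun t => by
    rw [Real.norm_of_nonneg (maxEntDens_pos lam t).le]
    exact (maxEntDens_le_one_add_pow_mul lam t).trans (hdom t))

lemma integrable_monom_mul_maxEntDens_of_le {i : Fin n → ℕ} (hi : ∑ m, i m ≤ 2 * k)
    {lam : {i // i ∈ I} → ℝ} (hbound : Integrable bound)
    (hdom : ∀ t, (1 + japaneseBracket t ^ (2 * k)) * maxEntDens k I lam t ≤ bound t) :
    Integrable fun t => monom i t * maxEntDens k I lam t :=
  hbound.mono' ((continuous_monom i).mul (continuous_maxEntDens lam)).aestronglyMeasurable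
    (ae_of_all _ fun t => (abs_monom_mul_maxEntDens_le hi lam t).trans (hdom t))

lemma Lag_eq_coe_of_le (g : (Fin n → ℕ) → ℝ) {lam : {i // i ∈ I} → ℝ} (hbound : Integrable bound)
    (hdom : ∀ t, (1 + japaneseBracket t ^ (2 * k)) * maxEntDens k I lam t ≤ bound t) :
    Lag I g (rhoRef k) lam
      = ((∑ i ∈ I.attach, g i.1 * lam i - ∫ t, maxEntDens k I lam t : ℝ) : EReal) :=
  Lag_eq_coe_of_integrable g (fun _ => (Real.exp_pos _).le)
    (integrable_maxEntDens_of_le hbound hdom)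

lemma mem_interior_setOf_Lag_ne_bot (g : (Fin n → ℕ) → ℝ) (hε : 0 < ε)
    (hbound : Integrable bound)
    (hdom : ∀ lam ∈ Metric.closedBall lamstar ε, ∀ t,
      (1 + japaneseBracket t ^ (2 * k)) * maxEntDens k I lam t ≤ bound t) :
    lamstar ∈ interior {lam | Lag I g (rhoRef k) lam ≠ ⊥} :=
  mem_interior_iff_mem_nhds.2 <| Filter.mem_of_superset (Metric.closedBall_mem_nhds lamstar hε)
    fun lam hlam => by
      rw [Set.mem_ofPred_eq, Lag_eq_coe_of_le g hbound (hdom lam hlam)]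
      exact EReal.coe_ne_bot _

lemma add_smul_single_mem_closedBall (ι : {i // i ∈ I}) {s : ℝ} (hs : s ∈ Metric.ball 0 ε) :
    lamstar + s • Pi.single ι 1 ∈ Metric.closedBall lamstar ε := by
  rw [Metric.mem_closedBall, dist_eq_norm, add_sub_cancel_left, norm_smul, Pi.norm_single,
    norm_one, mul_one, ← dist_zero_right]
  exact (Metric.mem_ball.1 hs).le

lemma hasDerivAt_integral_maxEntDens_add_smul_single (hI : ∀ i ∈ I, ∑ m, i m ≤ 2 * k)
    (hε : 0 < ε) (hbound : Integrable bound)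
    (hdom : ∀ lam ∈ Metric.closedBall lamstar ε, ∀ t,
      (1 + japaneseBracket t ^ (2 * k)) * maxEntDens k I lam t ≤ bound t)
    (ι : {i // i ∈ I}) :
    HasDerivAt (fun s : ℝ => ∫ t, maxEntDens k I (lamstar + s • Pi.single ι 1) t)
      (∫ t, monom ι.1 t * maxEntDens k I lamstar t) 0 := by
  have hline : ∀ s t, HasDerivAt (fun s : ℝ => maxEntDens k I (lamstar + s • Pi.single ι 1) t)
      (monom ι.1 t * maxEntDens k I (lamstar + s • Pi.single ι 1) t) s := by
    intro s t
    have hf : ∀ s, maxEntDens k I (lamstar + s • Pi.single ι 1) t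
        = Real.exp (coeffPoly I lamstar t + s * monom ι.1 t) * rhoRef k t := fun s => by
      rw [← coeffPoly_add_smul_single]; rfl
    simp only [hf]
    exact ((((hasDerivAt_mul_const (monom ι.1 t)).const_add
      (coeffPoly I lamstar t)).exp).mul_const (rhoRef k t)).congr_deriv (by ring)
  have hdom_line : ∀ s ∈ Metric.ball (0 : ℝ) ε, ∀ t,
      (1 + japaneseBracket t ^ (2 * k)) * maxEntDens k I (lamstar + s • Pi.single ι 1) t
        ≤ bound t := fun s hs => hdom _ (add_smul_single_mem_closedBall ι hs)
  have hint : Integrable (maxEntDens k I lamstar) :=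
    integrable_maxEntDens_of_le hbound (hdom lamstar (Metric.mem_closedBall_self hε.le))
  have hderiv_le : ∀ᵐ t, ∀ s ∈ Metric.ball (0 : ℝ) ε,
      ‖monom ι.1 t * maxEntDens k I (lamstar + s • Pi.single ι 1) t‖ ≤ bound t :=
    ae_of_all _ fun t s hs =>
      (abs_monom_mul_maxEntDens_le (hI ι.1 ι.2) _ t).trans (hdom_line s hs t)
  have key := hasDerivAt_integral_of_dominated_loc_of_deriv_le
    (F := fun s => maxEntDens k I (lamstar + s • Pi.single ι 1))
    (Metric.ball_mem_nhds (0 : ℝ) hε)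
    (Filter.Eventually.of_forall fun s => (continuous_maxEntDens _).aestronglyMeasurable)
    (by simpa using hint)
    ((continuous_monom ι.1).mul (continuous_maxEntDens _)).aestronglyMeasurable hderiv_le
    hbound (ae_of_all _ fun t s _ => hline s t)
  simpa using key.2

lemma integral_monom_mul_maxEntDens_eq_of_forall_Lag_le (g : (Fin n → ℕ) → ℝ)
    (hI : ∀ i ∈ I, ∑ m, i m ≤ 2 * k) (hε : 0 < ε) (hbound : Integrable bound)
    (hdom : ∀ lam ∈ Metric.closedBall lamstar ε, ∀ t,
      (1 + japaneseBracket t ^ (2 * k)) * maxEntDens k I lam t ≤ bound t)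
    (hmax : ∀ lam, Lag I g (rhoRef k) lam ≤ Lag I g (rhoRef k) lamstar) (ι : {i // i ∈ I}) :
    ∫ t, monom ι.1 t * maxEntDens k I lamstar t = g ι.1 := by
  set φ : ℝ → ℝ := fun s =>
    ∑ i ∈ I.attach, g i.1 * (lamstar + s • Pi.single ι 1 : {i // i ∈ I} → ℝ) i
      - ∫ t, maxEntDens k I (lamstar + s • Pi.single ι 1) t with hφ
  have hderiv : HasDerivAt φ (g ι.1 - ∫ t, monom ι.1 t * maxEntDens k I lamstar t) 0 := by
    simp only [hφ, sum_mul_add_smul_single]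
    exact ((hasDerivAt_mul_const _).const_add _).sub
      (hasDerivAt_integral_maxEntDens_add_smul_single hI hε hbound hdom ι)
  have hlocal : IsLocalMax φ 0 := by
    filter_upwards [Metric.ball_mem_nhds (0 : ℝ) hε] with s hs
    have h := hmax (lamstar + s • Pi.single ι 1)
    rw [Lag_eq_coe_of_le g hbound (hdom _ (add_smul_single_mem_closedBall ι hs)),
      Lag_eq_coe_of_le g hbound (hdom lamstar (Metric.mem_closedBall_self hε.le))] at h
    simpa [hφ] using EReal.coe_le_coe_iff.1 h
  linarith [hlocal.hasDerivAt_eq_zero hderiv]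

end Variational

theorem stmt_13_general {n : ℕ} (k : ℕ) (hk : 0 < k)
    (I : Finset (Fin n → ℕ)) (hI : ∀ i : Fin n → ℕ, i ∈ I ↔ ∑ m, i m ≤ 2 * k)
    (g : (Fin n → ℕ) → ℝ)
    (lamstar : {i // i ∈ I} → ℝ)
    (hmax : ∀ lam : {i // i ∈ I} → ℝ, Lag I g (rhoRef k) lam ≤ Lag I g (rhoRef k) lamstar)
    (hpneg : ∀ t : Fin n → ℝ, t ≠ 0 →
      (∑ i ∈ I.attach.filter (fun i => ∑ m, i.1 m = 2 * k), lamstar i * monom i.1 t) < 0) :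
    lamstar ∈ interior {lam : {i // i ∈ I} → ℝ | Lag I g (rhoRef k) lam ≠ ⊥} ∧
    (∀ i ∈ I, Integrable (fun t => monom i t * maxEntDens k I lamstar t)) ∧
    (∀ i ∈ I, ∫ t, monom i t * maxEntDens k I lamstar t = g i) := by
  have hdeg : ∀ i ∈ I, ∑ m, i m ≤ 2 * k := fun i hi => (hI i).1 hi
  obtain ⟨ε, hε, B, hdom⟩ := exists_one_add_pow_mul_maxEntDens_le hk hdeg lamstar
    (top_nonpos_of_neg hk lamstar hpneg)
  have hbound := (integrable_exp_neg_japaneseBracket_sq_div_two n).const_mul B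
  exact ⟨mem_interior_setOf_Lag_ne_bot g hε hbound hdom,
    fun i hi => integrable_monom_mul_maxEntDens_of_le (hdeg i hi) hbound
      (hdom lamstar (Metric.mem_closedBall_self hε.le)),
    fun i hi =>
      integral_monom_mul_maxEntDens_eq_of_forall_Lag_le g hdeg hε hbound hdom hmax ⟨i, hi⟩⟩

/-- For `T = ℝⁿ`, `I = {i : |i| ≤ 2k}` and `ρ(t) = e^{−‖t‖^{2k}}`, if `λ*` is a point where
the Lagrangian attains a finite global maximum and the homogeneous top-degree part
`p(t) = ∑_{|i|=2k} λ*_i t^i` is strictly negative off the origin, then `λ*` is interior to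
the effective domain of `L` and `f₀ = e^{∑ λ*_i t^i} ρ` solves the full truncated moment
problem `∫ t^i f₀ = g_i` for all `|i| ≤ 2k`. -/
theorem stmt_13 {n : ℕ} (k : ℕ) (hk : 0 < k)
    (I : Finset (Fin n → ℕ)) (hI : ∀ i : Fin n → ℕ, i ∈ I ↔ ∑ m, i m ≤ 2 * k)
    (g : (Fin n → ℕ) → ℝ) (hg0 : g 0 = 1)
    (lamstar : {i // i ∈ I} → ℝ)
    (hfin : Lag I g (rhoRef k) lamstar ≠ ⊥)
    (hmax : ∀ lam : {i // i ∈ I} → ℝ, Lag I g (rhoRef k) lam ≤ Lag I g (rhoRef k) lamstar)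
    (hpneg : ∀ t : Fin n → ℝ, t ≠ 0 →
      (∑ i ∈ I.attach.filter (fun i => ∑ m, i.1 m = 2 * k), lamstar i * monom i.1 t) < 0) :
    lamstar ∈ interior {lam : {i // i ∈ I} → ℝ | Lag I g (rhoRef k) lam ≠ ⊥} ∧
    (∀ i ∈ I, Integrable (fun t => monom i t * maxEntDens k I lamstar t)) ∧
    (∀ i ∈ I, ∫ t, monom i t * maxEntDens k I lamstar t = g i) :=
  stmt_13_general k hk I hI g lamstar hmax hpneg
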